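/- arXiv:1609.07953 — 4 statements merged into one kernel-verified Lean document; each statement's English description precedes it below -/
import Mathlib

section
/- Let F be a class of functions from T into [−M, M] with M > 0. For all ε ∈ (0, M] and all η ∈ (0, 2ε), the fat-shattering dimension with margin ε of the discretized class F^{(η)} is at most the fat-shattering dimension with margin ε − η/2 of F. -/
/-- A finite set `s` is γ-shattered by the class `F`: there is a witness `b` such that
every sign pattern on `s` is realized with margin γ by some `f ∈ F`. -/
def FatShattered {T : Type*} (F : Set (T → ℝ)) (γ : ℝ) (s : Finset T) : Prop :=
  ∃ b : T → ℝ, ∀ l : T → Bool, ∃ f ∈ F, ∀ t ∈ s,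
    if l t then γ ≤ f t - b t else γ ≤ b t - f t

/-- η-discretization operator for functions with range in `[-M, M]`. -/
noncomputable def discretize {T : Type*} (η M : ℝ) (f : T → ℝ) : T → ℝ :=
  fun t => η * (⌊(f t + M) / η⌋ : ℝ)

theorem stmt6 {T : Type*} (M : ℝ) (hM : 0 < M)
    (F : Set (T → ℝ)) (hF : ∀ f ∈ F, ∀ t, |f t| ≤ M)
    (ε η : ℝ) (hε0 : 0 < ε) (hεM : ε ≤ M) (hη0 : 0 < η) (hη : η < 2 * ε) :
    ∀ k : ℕ, (∃ s : Finset T, s.card = k ∧ FatShattered (discretize η M '' F) ε s) →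
      ∃ s : Finset T, s.card = k ∧ FatShattered F (ε - η / 2) s := by
  rintro k ⟨s, hcard, b, hb⟩
  refine ⟨s, hcard, fun t => b t - M + η / 2, fun l => ?_⟩
  obtain ⟨g, ⟨f, hfF, rfl⟩, hg⟩ := hb l
  refine ⟨f, hfF, fun t ht => ?_⟩
  have h1 : discretize η M f t ≤ f t + M := by
    have := Int.floor_le ((f t + M) / η)
    calc discretize η M f t = η * (⌊(f t + M) / η⌋ : ℝ) := rfl
      _ ≤ η * ((f t + M) / η) := by nlinarith
      _ = f t + M := by field_simp
  have h2 : f t + M < discretize η M f t + η := by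
    have := Int.lt_floor_add_one ((f t + M) / η)
    have : (f t + M) / η * η < ((⌊(f t + M) / η⌋ : ℝ) + 1) * η := by nlinarith
    have heq : (f t + M) / η * η = f t + M := by field_simp
    simp only [discretize]
    nlinarith
  have := hg t ht
  by_cases hl : l t <;> simp [hl] at this ⊢ <;> nlinarith
end

section
/- Let f_+, f_- : {t_1,…,t_n} → [−M, M] with M > 0, let N ≥ 4 be an integer, let p ≥ 1 be an integer, and suppose ε ∈ (6M/N, 2M] and d_{p,t_n}(f_+, f_-) ≥ ε. Let ind(f_+,f_-) be the number of indices i with |f_+(t_i) − f_-(t_i)| ≥ ε − 2M/N. Then ind(f_+, f_-) ≥ n/N^p. -/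
set_option maxHeartbeats 1000000


theorem stmt8 (n : ℕ) (hn : 0 < n) (M : ℝ) (hM : 0 < M) (f g : Fin n → ℝ)
    (hf : ∀ i, |f i| ≤ M) (hg : ∀ i, |g i| ≤ M)
    (N : ℕ) (hN : 4 ≤ N) (p : ℕ) (hp : 1 ≤ p)
    (ε : ℝ) (hε1 : 6 * M / N < ε) (hε2 : ε ≤ 2 * M)
    (hd : ε ≤ ((1 / (n : ℝ)) * ∑ i, |f i - g i| ^ p) ^ ((1 : ℝ) / (p : ℝ))) :
    (n : ℝ) / (N : ℝ) ^ p ≤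
      (Nat.card {i : Fin n // ε - 2 * M / N ≤ |f i - g i|} : ℝ) := by
  have hNpos : (0:ℝ) < N := by
    have : (4:ℝ) ≤ N := by exact_mod_cast hN
    linarith
  set δ : ℝ := 2 * M / N with hδdef
  have hδpos : 0 < δ := by positivity
  have h6 : 6 * M / N = 3 * δ := by rw [hδdef]; ring
  have hb2 : 2 * δ < ε := by rw [h6] at hε1; linarith
  have hεpos : 0 < ε := by linarith
  have hbpos : 0 < ε - δ := by linarith
  have hδb : δ ≤ ε - δ := by linarith
  have hpR : ((p:ℝ)) ≠ 0 := by
    have : 0 < p := hp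
    exact_mod_cast this.ne'
  set S := (1 / (n : ℝ)) * ∑ i, |f i - g i| ^ p with hSdef
  have hS0 : 0 ≤ S := by
    apply mul_nonneg
    · positivity
    · exact Finset.sum_nonneg fun i _ => by positivity
  have h1 : ε ^ p ≤ S := by
    have h := pow_le_pow_left₀ hεpos.le hd p
    rwa [← Real.rpow_natCast (S ^ ((1:ℝ)/p)) p, ← Real.rpow_mul hS0,
      one_div, inv_mul_cancel₀ hpR, Real.rpow_one] at h
  have hk : ((Nat.card {i : Fin n // ε - 2 * M / N ≤ |f i - g i|} : ℕ) : ℝ)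
      = ((Finset.univ.filter (fun i : Fin n => ε - 2 * M / N ≤ |f i - g i|)).card : ℝ) := by
    rw [Nat.card_eq_fintype_card, Fintype.card_subtype]
  set k : ℕ := (Finset.univ.filter (fun i : Fin n => ε - 2 * M / N ≤ |f i - g i|)).card with hkdef
  -- pointwise bound and sum split
  have h2 : ∑ i, |f i - g i| ^ p ≤ (k:ℝ) * (2*M)^p + (n:ℝ) * (ε - δ)^p := by
    have hpt : ∀ i ∈ Finset.univ, |f i - g i| ^ p ≤
        (if ε - 2 * M / N ≤ |f i - g i| then (2*M)^p else (ε - δ)^p) := by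
      intro i _
      by_cases h : ε - 2 * M / N ≤ |f i - g i|
      · simp only [h, if_true]
        apply pow_le_pow_left₀ (abs_nonneg _)
        have := abs_sub (f i) (g i)
        calc |f i - g i| ≤ |f i| + |g i| := abs_sub _ _
          _ ≤ 2 * M := by linarith [hf i, hg i]
      · simp only [h, if_false]
        apply pow_le_pow_left₀ (abs_nonneg _)
        have := le_of_not_ge h
        rw [hδdef]
        linarith
    calc ∑ i, |f i - g i| ^ p ≤ ∑ i, (if ε - 2 * M / N ≤ |f i - g i| then (2*M)^p else (ε - δ)^p) :=
          Finset.sum_le_sum hpt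
      _ = (k:ℝ) * (2*M)^p +
          ((Finset.univ.filter (fun i : Fin n => ¬ (ε - 2 * M / N ≤ |f i - g i|))).card : ℝ) * (ε - δ)^p := by
          rw [Finset.sum_ite, Finset.sum_const, Finset.sum_const, nsmul_eq_mul, nsmul_eq_mul,
            hkdef]
      _ ≤ (k:ℝ) * (2*M)^p + (n:ℝ) * (ε - δ)^p := by
          have hcard : ((Finset.univ.filter (fun i : Fin n => ¬ (ε - 2 * M / N ≤ |f i - g i|))).card : ℝ) ≤ (n:ℝ) := by
            exact_mod_cast (Finset.card_filter_le _ _).trans (by simp)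
          have hy : (0:ℝ) ≤ (ε - δ)^p := by positivity
          exact add_le_add le_rfl (mul_le_mul_of_nonneg_right hcard hy)
  -- key inequality: δ^p ≤ ε^p - (ε-δ)^p
  obtain ⟨q, rfl⟩ : ∃ q, p = q + 1 := ⟨p - 1, (Nat.succ_pred_eq_of_pos hp).symm⟩
  have h3 : δ ^ (q+1) ≤ ε ^ (q+1) - (ε - δ) ^ (q+1) := by
    have e1 : (ε - δ) ^ q ≤ ε ^ q := pow_le_pow_left₀ hbpos.le (by linarith) q
    have e2 : δ ^ q ≤ (ε - δ) ^ q := pow_le_pow_left₀ hδpos.le hδb q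
    have key : (ε - δ) ^ (q+1) + δ * (ε - δ) ^ q = (ε - δ) ^ q * ε := by ring
    have key2 : (ε - δ) ^ q * ε ≤ ε ^ q * ε := by
      exact mul_le_mul_of_nonneg_right e1 hεpos.le
    have : δ ^ (q+1) ≤ δ * (ε - δ) ^ q := by
      rw [pow_succ']
      exact mul_le_mul_of_nonneg_left e2 hδpos.le
    nlinarith [pow_succ ε q]
  -- combine
  have hnε : (n:ℝ) * ε ^ (q+1) ≤ ∑ i, |f i - g i| ^ (q+1) := by
    have hn' : (0:ℝ) < n := by exact_mod_cast hn
    rw [hSdef] at h1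
    rw [mul_comm]
    calc ε ^ (q+1) * n ≤ ((1 / (n : ℝ)) * ∑ i, |f i - g i| ^ (q+1)) * n :=
          mul_le_mul_of_nonneg_right h1 hn'.le
      _ = ∑ i, |f i - g i| ^ (q+1) := by field_simp
  have hfinal : (n:ℝ) * δ ^ (q+1) ≤ (k:ℝ) * (2*M)^(q+1) := by
    have hn' : (0:ℝ) ≤ n := by positivity
    nlinarith [mul_le_mul_of_nonneg_left h3 hn']
  rw [hk]
  have hδpow : δ ^ (q+1) = (2*M)^(q+1) / (N:ℝ)^(q+1) := by
    rw [hδdef, div_pow]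
  rw [hδpow] at hfinal
  rw [div_le_iff₀ (by positivity)]
  have h2M : (0:ℝ) < (2*M)^(q+1) := by positivity
  have hY : (0:ℝ) < (N:ℝ)^(q+1) := pow_pos hNpos _
  rw [← mul_div_assoc, div_le_iff₀ hY] at hfinal
  refine le_of_mul_le_mul_right ?_ h2M
  calc (n:ℝ) * (2*M)^(q+1) ≤ (k:ℝ) * (2*M)^(q+1) * (N:ℝ)^(q+1) := hfinal
    _ = (k:ℝ) * (N:ℝ)^(q+1) * (2*M)^(q+1) := by ring
end

section
/- Let F be a finite class of functions from {t_1,…,t_n} into [−M, M] with M > 0, let p be a positive integer, and suppose F is ε-separated with respect to d_{p,t_n} for some ε ∈ (0, 2M]. If r ∈ [1, n] satisfies |F| ≤ exp(K_e(p) · r · ε^{2p}) with K_e(p) = 3/(112·(2M)^{2p}), then there exists a subset S ⊆ {1,…,n} of size q ≤ r such that F is ((1/2)^{(p+1)/p} ε)-separated with respect to d_{p, (t_i)_{i∈S}}. -/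
lemma aux_exp_neg_le {u : ℝ} (hu : 0 ≤ u) : Real.exp (-u) ≤ 1 - u + u^2/2 := by
  have h := Real.quadratic_le_exp_of_nonneg hu
  have h2 : Real.exp (-u) * Real.exp u = 1 := by rw [← Real.exp_add]; simp
  have h3 := Real.exp_pos (-u)
  nlinarith [sq_nonneg (u^2), mul_le_mul_of_nonneg_left h h3.le]

lemma aux_inv_exp {y : ℝ} (hy : 0 ≤ y) : Real.exp (-y) ≤ 1/(1+y) := by
  rw [Real.exp_neg, one_div]
  exact inv_anti₀ (by linarith) (by linarith [Real.add_one_le_exp y])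

lemma aux_keyId (n : ℕ) (gf : Fin n → Bool → ℝ) :
    ∑ ω : Fin n → Bool, ∏ i, gf i (ω i) = ∏ i, (gf i true + gf i false) := by
  rw [← Fintype.prod_sum (f := gf)]
  simp

set_option maxHeartbeats 2000000 in
theorem stmt12 (n : ℕ) (hn : 0 < n) (M : ℝ) (hM : 0 < M)
    (F : Finset (Fin n → ℝ)) (hFb : ∀ f ∈ F, ∀ i, |f i| ≤ M)
    (p : ℕ) (hp : 0 < p) (ε : ℝ) (hε0 : 0 < ε) (hε : ε ≤ 2 * M)
    (hsep : ∀ f ∈ F, ∀ g ∈ F, f ≠ g →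
      ε ≤ ((1 / (n : ℝ)) * ∑ i, |f i - g i| ^ p) ^ ((1 : ℝ) / (p : ℝ)))
    (r : ℝ) (hr1 : 1 ≤ r) (hrn : r ≤ n)
    (hcard : (F.card : ℝ) ≤
      Real.exp ((3 / (112 * (2 * M) ^ (2 * p))) * r * ε ^ (2 * p))) :
    ∃ S : Finset (Fin n), (S.card : ℝ) ≤ r ∧
      ∀ f ∈ F, ∀ g ∈ F, f ≠ g →
        (1 / 2 : ℝ) ^ (((p : ℝ) + 1) / (p : ℝ)) * ε ≤
          ((1 / (S.card : ℝ)) * ∑ i ∈ S, |f i - g i| ^ p) ^ ((1 : ℝ) / (p : ℝ)) := by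
  classical
  by_cases hF2 : F.card ≤ 1
  · refine ⟨∅, by simpa using le_trans zero_le_one hr1, ?_⟩
    intro f hf g hg hfg
    exact absurd (Finset.card_le_one.mp hF2 f hf g hg) hfg
  push_neg at hF2
  have hn' : (0:ℝ) < n := by exact_mod_cast hn
  have hp' : (0:ℝ) < p := by exact_mod_cast hp
  have hpn0 : (p:ℝ) ≠ 0 := ne_of_gt hp'
  have h2M : (0:ℝ) < 2*M := by linarith
  have h2Mp : (0:ℝ) < (2*M)^p := pow_pos h2M p
  have hr0 : (0:ℝ) < r := lt_of_lt_of_le one_pos hr1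
  set θ : ℝ := r/(2*n) with hθdef
  have hθ0 : 0 < θ := div_pos hr0 (by linarith)
  have hθ1 : θ ≤ 1/2 := by
    rw [hθdef, div_le_iff₀ (by linarith)]; linarith
  set lam : ℝ := 1/(2*(2*M)^p) with hlamdef
  have hlam0 : 0 < lam := by positivity
  set a : ℝ := r * ε^p / 2^(p+1) with hadef
  have hεp0 : 0 < ε^p := pow_pos hε0 p
  have ha0 : 0 < a := by positivity
  set c : ℝ := ε^p / (2*M)^p with hcdef
  have hc0 : 0 < c := by positivity
  have hc1 : c ≤ 1 := by
    rw [hcdef, div_le_one h2Mp]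
    exact pow_le_pow_left₀ hε0.le hε p
  -- weights
  set w : (Fin n → Bool) → ℝ := fun ω => ∏ i, (if ω i then θ else 1-θ) with hwdef
  have hw0 : ∀ ω, 0 ≤ w ω := by
    intro ω; apply Finset.prod_nonneg; intro i _
    by_cases h : ω i <;> simp [h] <;> linarith
  have Ekey : ∀ gfun : Fin n → Bool → ℝ,
      ∑ ω : Fin n → Bool, w ω * ∏ i, gfun i (ω i)
        = ∏ i, (θ * gfun i true + (1-θ) * gfun i false) := by
    intro gfun
    have h1 : ∀ ω : Fin n → Bool, w ω * ∏ i, gfun i (ω i)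
        = ∏ i, ((fun i b => (if b then θ else 1-θ) * gfun i b) i (ω i)) := by
      intro ω; rw [hwdef, ← Finset.prod_mul_distrib]
    have h2 := aux_keyId n (fun i b => (if b then θ else 1-θ) * gfun i b)
    rw [Finset.sum_congr rfl (fun ω _ => h1 ω)]
    exact h2.trans (by simp)
  have hw1 : ∑ ω : Fin n → Bool, w ω = 1 := by
    have h := Ekey (fun _ _ => 1)
    simpa using h
  set S : (Fin n → Bool) → Finset (Fin n) :=
    fun ω => Finset.univ.filter (fun i => ω i = true) with hSdef
  -- bound for the cardinality term
  have cardE : ∑ ω : Fin n → Bool,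
      w ω * Real.exp (Real.log 2 * (((S ω).card : ℝ) - r))
        ≤ Real.exp (r * (1/2 - Real.log 2)) := by
    have step1 : ∀ ω : Fin n → Bool,
        Real.exp (Real.log 2 * (((S ω).card:ℝ) - r))
          = Real.exp (-(Real.log 2 * r)) *
              ∏ i, ((fun (_ : Fin n) (b : Bool) => if b then (2:ℝ) else 1) i (ω i)) := by
      intro ω
      have h2 : ∏ i, (if ω i = true then (2:ℝ) else 1) = 2 ^ (S ω).card := by
        rw [hSdef, ← Finset.prod_filter, Finset.prod_const]
      have h3 : Real.exp (Real.log 2 * (((S ω).card:ℝ) - r))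
          = Real.exp (-(Real.log 2 * r)) * Real.exp ((((S ω).card:ℕ):ℝ) * Real.log 2) := by
        rw [← Real.exp_add]; ring_nf
      rw [h3, Real.exp_nat_mul, Real.exp_log two_pos, ← h2]
    calc ∑ ω : Fin n → Bool, w ω * Real.exp (Real.log 2 * (((S ω).card:ℝ) - r))
        = Real.exp (-(Real.log 2 * r)) * ∑ ω : Fin n → Bool,
            w ω * ∏ i, ((fun (_ : Fin n) (b : Bool) => if b then (2:ℝ) else 1) i (ω i)) := by
          rw [Finset.mul_sum]
          exact Finset.sum_congr rfl (fun ω _ => by rw [step1 ω]; ring)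
      _ = Real.exp (-(Real.log 2 * r)) * ∏ (_ : Fin n), (θ * 2 + (1-θ) * 1) := by
          congr 1
          exact (Ekey (fun _ b => if b then (2:ℝ) else 1)).trans
            (Finset.prod_congr rfl (fun i _ => by norm_num))
      _ = Real.exp (-(Real.log 2 * r)) * (1+θ)^n := by
          rw [Finset.prod_const]
          congr 2
          · ring
          · simp
      _ ≤ Real.exp (-(Real.log 2 * r)) * Real.exp θ ^ n := by
          apply mul_le_mul_of_nonneg_left _ (Real.exp_pos _).le
          apply pow_le_pow_left₀ (by linarith)
          linarith [Real.add_one_le_exp θ]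
      _ = Real.exp (r * (1/2 - Real.log 2)) := by
          rw [← Real.exp_nat_mul, ← Real.exp_add]
          congr 1
          rw [hθdef]
          field_simp
          ring
  -- bound for each pair term
  have pairE : ∀ f ∈ F, ∀ g ∈ F, f ≠ g →
      ∑ ω : Fin n → Bool,
        w ω * Real.exp (lam * (a - ∑ i ∈ S ω, |f i - g i|^p))
          ≤ Real.exp (-(r*c)/16) := by
    intro f hf g hg hne
    set x : Fin n → ℝ := fun i => |f i - g i|^p with hxdef
    have hx0 : ∀ i, 0 ≤ x i := fun i => by positivity
    have hxM : ∀ i, x i ≤ (2*M)^p := by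
      intro i
      apply pow_le_pow_left₀ (abs_nonneg _)
      calc |f i - g i| ≤ |f i| + |g i| := abs_sub _ _
        _ ≤ 2*M := by have := hFb f hf i; have := hFb g hg i; linarith
    have hT : (n:ℝ) * ε^p ≤ ∑ i, x i := by
      have hA : (0:ℝ) ≤ (1/(n:ℝ)) * ∑ i, x i := by positivity
      have h1 := hsep f hf g hg hne
      have h3 : ε^p ≤ (((1/(n:ℝ)) * ∑ i, x i) ^ ((1:ℝ)/(p:ℝ)))^p :=
        pow_le_pow_left₀ hε0.le h1 p
      rw [← Real.rpow_natCast (((1/(n:ℝ)) * ∑ i, x i) ^ ((1:ℝ)/(p:ℝ))) p,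
        ← Real.rpow_mul hA, one_div_mul_cancel hpn0, Real.rpow_one] at h3
      have h4 := mul_le_mul_of_nonneg_left h3 hn'.le
      calc (n:ℝ) * ε^p ≤ (n:ℝ) * ((1/(n:ℝ)) * ∑ i, x i) := h4
        _ = ∑ i, x i := by field_simp
    have hlamx : ∀ i, lam * x i ≤ 1/2 := by
      intro i
      have hXi := hxM i
      rw [hlamdef]
      rw [div_mul_eq_mul_div, div_le_div_iff₀ (by positivity) two_pos]
      nlinarith
    have s2 : ∀ ω : Fin n → Bool,
        Real.exp (lam * (a - ∑ i ∈ S ω, x i))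
          = Real.exp (lam * a) * ∏ i,
              ((fun i (b : Bool) => if b then Real.exp (-(lam * x i)) else 1) i (ω i)) := by
      intro ω
      have hZ : ∑ i ∈ S ω, x i = ∑ i, (if ω i = true then x i else 0) := by
        rw [hSdef]; exact Finset.sum_filter _ _
      have e1 : lam * (a - ∑ i ∈ S ω, x i)
          = lam * a + ∑ i, (if ω i = true then -(lam * x i) else 0) := by
        rw [hZ, mul_sub, Finset.mul_sum, sub_eq_add_neg, ← Finset.sum_neg_distrib]
        congr 1
        exact Finset.sum_congr rfl (fun i _ => by by_cases h : ω i <;> simp [h])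
      rw [e1, Real.exp_add, Real.exp_sum]
      congr 1
      exact Finset.prod_congr rfl (fun i _ => by by_cases h : ω i <;> simp [h])
    have expbound : lam * a + ∑ i, θ * (Real.exp (-(lam * x i)) - 1) ≤ -(r*c)/16 := by
      have hterm : ∀ i, θ * (Real.exp (-(lam * x i)) - 1)
          ≤ θ * (-(3/4) * (lam * x i)) := by
        intro i
        apply mul_le_mul_of_nonneg_left _ hθ0.le
        have hu : 0 ≤ lam * x i := mul_nonneg hlam0.le (hx0 i)
        have h1 := aux_exp_neg_le hu
        have h2 := hlamx i
        nlinarith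
      have hsum : ∑ i, θ * (Real.exp (-(lam * x i)) - 1)
          ≤ -(3/4) * (θ * lam * (∑ i, x i)) := by
        calc ∑ i, θ * (Real.exp (-(lam * x i)) - 1)
            ≤ ∑ i, θ * (-(3/4) * (lam * x i)) :=
              Finset.sum_le_sum (fun i _ => hterm i)
          _ = -(3/4) * (θ * lam * (∑ i, x i)) := by
              simp only [Finset.mul_sum]
              exact Finset.sum_congr rfl (fun i _ => by ring)
      have e2 : lam * ε^p = c/2 := by
        rw [hlamdef, hcdef]; field_simp
      have e3 : lam * r * ε^p / 2 ≤ θ * lam * (∑ i, x i) := by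
        have h5 : θ * lam * ((n:ℝ) * ε^p) ≤ θ * lam * (∑ i, x i) :=
          mul_le_mul_of_nonneg_left hT (by positivity)
        have h6 : θ * lam * ((n:ℝ) * ε^p) = lam * r * ε^p / 2 := by
          rw [hθdef]; field_simp
        linarith
      have h4 : (4:ℝ) ≤ 2^(p+1) := by
        calc (4:ℝ) = 2^2 := by norm_num
          _ ≤ 2^(p+1) := pow_le_pow_right₀ one_le_two (by omega)
      have e4 : lam * a ≤ lam * r * ε^p / 4 := by
        rw [hadef]
        have h7 : r * ε^p / 2^(p+1) ≤ r * ε^p / 4 := by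
          apply div_le_div_of_nonneg_left (by positivity) (by norm_num) h4
        calc lam * (r * ε^p / 2^(p+1)) ≤ lam * (r * ε^p / 4) :=
              mul_le_mul_of_nonneg_left h7 hlam0.le
          _ = lam * r * ε^p / 4 := by ring
      have e5 : lam * r * ε^p = r * c / 2 := by
        have h8 : r * (lam * ε^p) = r * (c/2) := by rw [e2]
        linarith [h8]
      calc lam * a + ∑ i, θ * (Real.exp (-(lam * x i)) - 1)
          ≤ lam * a + (-(3/4) * (θ * lam * (∑ i, x i))) := by linarith [hsum]
        _ ≤ lam * r * ε^p / 4 - (3/4) * (lam * r * ε^p / 2) := by linarith [e3, e4]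
        _ = -(r*c)/16 := by rw [e5]; ring
    calc ∑ ω : Fin n → Bool, w ω * Real.exp (lam * (a - ∑ i ∈ S ω, x i))
        = Real.exp (lam*a) * ∑ ω : Fin n → Bool, w ω *
            ∏ i, ((fun i (b:Bool) => if b then Real.exp (-(lam * x i)) else 1) i (ω i)) := by
          rw [Finset.mul_sum]
          exact Finset.sum_congr rfl (fun ω _ => by rw [s2 ω]; ring)
      _ = Real.exp (lam*a) * ∏ i, (θ * Real.exp (-(lam * x i)) + (1-θ)) := by
          congr 1
          exact (Ekey (fun i (b:Bool) => if b then Real.exp (-(lam * x i)) else 1)).trans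
            (Finset.prod_congr rfl (fun i _ => by norm_num))
      _ ≤ Real.exp (lam*a) * ∏ i, Real.exp (θ * (Real.exp (-(lam * x i)) - 1)) := by
          apply mul_le_mul_of_nonneg_left _ (Real.exp_pos _).le
          apply Finset.prod_le_prod
          · intro i _
            have h0 : (0:ℝ) ≤ θ * Real.exp (-(lam * x i)) := by positivity
            linarith
          · intro i _
            have h := Real.add_one_le_exp (θ * (Real.exp (-(lam * x i)) - 1))
            have hring : θ * Real.exp (-(lam * x i)) + (1-θ)
                = θ * (Real.exp (-(lam * x i)) - 1) + 1 := by ring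
            rw [hring]
            linarith
      _ = Real.exp (lam*a + ∑ i, θ * (Real.exp (-(lam * x i)) - 1)) := by
          rw [← Real.exp_sum, ← Real.exp_add]
      _ ≤ Real.exp (-(r*c)/16) := Real.exp_le_exp.mpr expbound
  -- numeric facts
  have hL1 : (0.6931471803:ℝ) < Real.log 2 := Real.log_two_gt_d9
  have hL2 : Real.log 2 < 0.6931471808 := Real.log_two_lt_d9
  have hε2p : ε^(2*p) = (ε^p)^2 := by rw [mul_comm 2 p, pow_mul]
  have hM2p : (2*M)^(2*p) = ((2*M)^p)^2 := by rw [mul_comm 2 p, pow_mul]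
  have hcard2 : (F.card:ℝ) ≤ Real.exp (3/112 * (r * c^2)) := by
    have harg : 3 / (112 * (2 * M) ^ (2 * p)) * r * ε ^ (2 * p) = 3/112 * (r * c^2) := by
      rw [hcdef, hε2p, hM2p]
      field_simp
    rwa [harg] at hcard
  have h2F : (2:ℝ) ≤ (F.card:ℝ) := by exact_mod_cast hF2
  have hlogB : Real.log 2 ≤ 3/112 * (r * c^2) := by
    have h1 := Real.log_le_log two_pos (le_trans h2F hcard2)
    rwa [Real.log_exp] at h1
  have hBrc : r * c^2 ≤ r * c := by nlinarith
  have hBr : r * c^2 ≤ r := by nlinarith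
  have hfinalnum : Real.exp (r * (1/2 - Real.log 2))
      + (F.card:ℝ)^2 * Real.exp (-(r*c)/16) < 1 := by
    have t2 : (F.card:ℝ)^2 * Real.exp (-(r*c)/16) ≤ 1/(1 + 0.6931471803/3) := by
      have s1 : (F.card:ℝ)^2 ≤ Real.exp (3/56 * (r * c^2)) := by
        calc (F.card:ℝ)^2 ≤ (Real.exp (3/112 * (r * c^2)))^2 :=
              pow_le_pow_left₀ (by positivity) hcard2 2
          _ = Real.exp (3/56 * (r * c^2)) := by
              rw [← Real.exp_nat_mul]
              congr 1
              push_cast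
              ring
      have s2 : Real.exp (-(r*c)/16) ≤ Real.exp (-(r*c^2)/16) :=
        Real.exp_le_exp.mpr (by linarith)
      have s3 : (F.card:ℝ)^2 * Real.exp (-(r*c)/16)
          ≤ Real.exp (3/56 * (r*c^2)) * Real.exp (-(r*c^2)/16) :=
        mul_le_mul s1 s2 (Real.exp_pos _).le (Real.exp_pos _).le
      have s4 : Real.exp (3/56 * (r*c^2)) * Real.exp (-(r*c^2)/16)
          = Real.exp (-(r*c^2/112)) := by
        rw [← Real.exp_add]; congr 1; ring
      have s5 : Real.exp (-(r*c^2/112)) ≤ Real.exp (-(Real.log 2/3)) :=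
        Real.exp_le_exp.mpr (by linarith)
      have s6 : Real.exp (-(Real.log 2/3)) ≤ 1/(1+Real.log 2/3) :=
        aux_inv_exp (by linarith)
      have s7 : 1/(1+Real.log 2/3) ≤ 1/(1 + 0.6931471803/3) :=
        one_div_le_one_div_of_le (by norm_num) (by linarith)
      linarith
    have t1 : Real.exp (r * (1/2 - Real.log 2)) ≤ 1/(1+(4.99:ℝ)) := by
      have hrL : 112 * Real.log 2 / 3 ≤ r := by nlinarith
      have hneg : 1/2 - Real.log 2 ≤ 0 := by linarith
      have h8 : r * (1/2 - Real.log 2) ≤ (112 * Real.log 2 / 3) * (1/2 - Real.log 2) :=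
        mul_le_mul_of_nonpos_right hrL hneg
      have h9 : (112 * Real.log 2 / 3) * (1/2 - Real.log 2) ≤ -4.99 := by
        nlinarith [hL1, hL2]
      calc Real.exp (r * (1/2 - Real.log 2)) ≤ Real.exp (-(4.99:ℝ)) :=
            Real.exp_le_exp.mpr (by linarith)
        _ ≤ 1/(1+(4.99:ℝ)) := aux_inv_exp (by norm_num)
    have hnum : (1:ℝ)/(1+(4.99:ℝ)) + 1/(1 + 0.6931471803/3) < 1 := by norm_num
    linarith
  -- existence of a good ω
  have hgood : ∃ ω : Fin n → Bool, ((S ω).card : ℝ) ≤ r ∧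
      ∀ q ∈ F.offDiag, a ≤ ∑ i ∈ S ω, |q.1 i - q.2 i|^p := by
    by_contra hbad
    push_neg at hbad
    have hpoint : ∀ ω : Fin n → Bool, (1:ℝ) ≤
        Real.exp (Real.log 2 * (((S ω).card:ℝ) - r)) +
          ∑ q ∈ F.offDiag, Real.exp (lam * (a - ∑ i ∈ S ω, |q.1 i - q.2 i|^p)) := by
      intro ω
      have hsum0 : (0:ℝ) ≤ ∑ q ∈ F.offDiag,
          Real.exp (lam * (a - ∑ i ∈ S ω, |q.1 i - q.2 i|^p)) :=
        Finset.sum_nonneg (fun q _ => (Real.exp_pos _).le)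
      by_cases hcase : ((S ω).card:ℝ) ≤ r
      · obtain ⟨q, hq, hqlt⟩ := hbad ω hcase
        have h1 : (1:ℝ) ≤ Real.exp (lam * (a - ∑ i ∈ S ω, |q.1 i - q.2 i|^p)) := by
          rw [← Real.exp_zero]
          apply Real.exp_le_exp.mpr
          have h0 : 0 ≤ a - ∑ i ∈ S ω, |q.1 i - q.2 i|^p := by linarith
          positivity
        have h2 := Finset.single_le_sum
          (f := fun q : (Fin n → ℝ) × (Fin n → ℝ) =>
            Real.exp (lam * (a - ∑ i ∈ S ω, |q.1 i - q.2 i|^p)))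
          (fun q _ => (Real.exp_pos _).le) hq
        have h3 := (Real.exp_pos (Real.log 2 * (((S ω).card:ℝ) - r))).le
        linarith
      · push_neg at hcase
        have hl2 : 0 < Real.log 2 := Real.log_pos one_lt_two
        have h1 : (1:ℝ) ≤ Real.exp (Real.log 2 * (((S ω).card:ℝ) - r)) := by
          rw [← Real.exp_zero]
          apply Real.exp_le_exp.mpr
          nlinarith
        linarith
    have hsum1 : (1:ℝ) ≤ ∑ ω : Fin n → Bool, w ω *
        (Real.exp (Real.log 2 * (((S ω).card:ℝ) - r)) +
          ∑ q ∈ F.offDiag, Real.exp (lam * (a - ∑ i ∈ S ω, |q.1 i - q.2 i|^p))) := by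
      rw [← hw1]
      apply Finset.sum_le_sum
      intro ω _
      calc w ω = w ω * 1 := (mul_one _).symm
        _ ≤ _ := mul_le_mul_of_nonneg_left (hpoint ω) (hw0 ω)
    have hsplit : ∑ ω : Fin n → Bool, w ω *
        (Real.exp (Real.log 2 * (((S ω).card:ℝ) - r)) +
          ∑ q ∈ F.offDiag, Real.exp (lam * (a - ∑ i ∈ S ω, |q.1 i - q.2 i|^p)))
        = (∑ ω : Fin n → Bool, w ω * Real.exp (Real.log 2 * (((S ω).card:ℝ) - r)))
          + ∑ q ∈ F.offDiag, ∑ ω : Fin n → Bool,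
              w ω * Real.exp (lam * (a - ∑ i ∈ S ω, |q.1 i - q.2 i|^p)) := by
      simp only [mul_add, Finset.sum_add_distrib, Finset.mul_sum]
      rw [Finset.sum_comm]
    have hpairsum : ∑ q ∈ F.offDiag, ∑ ω : Fin n → Bool,
        w ω * Real.exp (lam * (a - ∑ i ∈ S ω, |q.1 i - q.2 i|^p))
          ≤ (F.card:ℝ)^2 * Real.exp (-(r*c)/16) := by
      calc ∑ q ∈ F.offDiag, ∑ ω : Fin n → Bool,
          w ω * Real.exp (lam * (a - ∑ i ∈ S ω, |q.1 i - q.2 i|^p))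
          ≤ ∑ _q ∈ F.offDiag, Real.exp (-(r*c)/16) := by
            apply Finset.sum_le_sum
            intro q hq
            obtain ⟨hq1, hq2, hq3⟩ := Finset.mem_offDiag.mp hq
            exact pairE q.1 hq1 q.2 hq2 hq3
        _ = (F.offDiag.card : ℝ) * Real.exp (-(r*c)/16) := by
            rw [Finset.sum_const, nsmul_eq_mul]
        _ ≤ (F.card:ℝ)^2 * Real.exp (-(r*c)/16) := by
            apply mul_le_mul_of_nonneg_right _ (Real.exp_pos _).le
            have h1 : F.offDiag.card ≤ F.card * F.card := by
              rw [Finset.offDiag_card]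
              omega
            calc (F.offDiag.card : ℝ) ≤ ((F.card * F.card : ℕ) : ℝ) := by exact_mod_cast h1
              _ = (F.card:ℝ)^2 := by push_cast; ring
    have hcontra : (1:ℝ) < 1 := by
      calc (1:ℝ) ≤ _ := hsum1
        _ = _ := hsplit
        _ ≤ Real.exp (r * (1/2 - Real.log 2)) + (F.card:ℝ)^2 * Real.exp (-(r*c)/16) :=
            add_le_add cardE hpairsum
        _ < 1 := hfinalnum
    exact absurd hcontra (lt_irrefl 1)
  -- conclusion
  obtain ⟨ω, hω1, hω2⟩ := hgood
  refine ⟨S ω, hω1, ?_⟩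
  intro f hf g hg hne
  have hq := hω2 (f, g) (Finset.mem_offDiag.mpr ⟨hf, hg, hne⟩)
  have hZ0 : (0:ℝ) ≤ ∑ i ∈ S ω, |f i - g i|^p :=
    Finset.sum_nonneg (fun i _ => by positivity)
  have hq0 : (0:ℝ) < ((S ω).card:ℝ) := by
    rcases Finset.eq_empty_or_nonempty (S ω) with h | h
    · exfalso
      rw [h] at hq
      simp at hq
      linarith
    · exact_mod_cast Finset.card_pos.mpr h
  have key : ((1/2:ℝ)^(((p:ℝ)+1)/(p:ℝ)) * ε)^p
      ≤ (1/((S ω).card:ℝ)) * ∑ i ∈ S ω, |f i - g i|^p := by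
    have c1 : ((1/2:ℝ)^(((p:ℝ)+1)/(p:ℝ)))^p = (1/2:ℝ)^(p+1) := by
      rw [← Real.rpow_natCast ((1/2:ℝ)^(((p:ℝ)+1)/(p:ℝ))) p,
        ← Real.rpow_mul (by norm_num), div_mul_cancel₀ _ hpn0,
        show ((p:ℝ)+1) = ((p+1 : ℕ):ℝ) by push_cast; ring, Real.rpow_natCast]
    rw [mul_pow, c1]
    have h2p : (0:ℝ) < 2^(p+1) := by positivity
    have hhalf : (1/2:ℝ)^(p+1) = 1/2^(p+1) := by
      rw [div_pow]; norm_num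
    rw [hhalf]
    have i1 : a / r ≤ (∑ i ∈ S ω, |f i - g i|^p) / r :=
      (div_le_div_iff_of_pos_right hr0).mpr hq
    have i2 : (∑ i ∈ S ω, |f i - g i|^p) / r
        ≤ (∑ i ∈ S ω, |f i - g i|^p) / ((S ω).card:ℝ) :=
      div_le_div_of_nonneg_left hZ0 hq0 hω1
    have i3 : a / r = 1/2^(p+1) * ε^p := by
      rw [hadef]; field_simp
    have i4 : (∑ i ∈ S ω, |f i - g i|^p) / ((S ω).card:ℝ)
        = (1/((S ω).card:ℝ)) * ∑ i ∈ S ω, |f i - g i|^p := by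
      ring
    linarith
  have hc0' : 0 ≤ (1/2:ℝ)^(((p:ℝ)+1)/(p:ℝ)) * ε :=
    mul_nonneg (Real.rpow_nonneg (by norm_num) _) hε0.le
  have hfinal := Real.rpow_le_rpow (pow_nonneg hc0' p) key
    (by positivity : (0:ℝ) ≤ 1/(p:ℝ))
  rwa [← Real.rpow_natCast ((1/2:ℝ)^(((p:ℝ)+1)/(p:ℝ)) * ε) p, ← Real.rpow_mul hc0',
    mul_one_div, div_self hpn0, Real.rpow_one] at hfinal
end

section
/- Let G = Π_{k=1}^C G_k be a class of functions from X into [−M, M]^C with M ≥ 1 and C ≥ 3. For g = (g_k) ∈ G define f_g(x, y) = (1/2)(g_y(x) − max_{l≠y} g_l(x)). Then for every ε > 0, every m ≥ 1, every sample z_m = ((x_i, y_i))_{1≤i≤m} ∈ (X × {1,…,C})^m, and every p ∈ ℕ* ∪ {∞}, the proper covering number of F_G = {f_g : g ∈ G} satisfies N^(p)(ε, F_G, d_{p,z_m}) ≤ Π_{k=1}^C N^(p)(ε/C^{1/p}, G_k, d_{p,x_m}), where x_m = (x_i) and for p = ∞ the factor C^{1/p} is interpreted as 1. -/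
/-!
A cover of the margin class is obtained by taking the margin functions of all tuples of centres
from covers of the component classes, so its size is at most the product of their sizes. This
works because the margin map is pointwise dominated by one coordinate: at `(x, y)` the difference
`f_g(x, y) - f_c(x, y)` is half of the difference at coordinate `y` minus the difference of two
maxima, and each is bounded by `max_k |g_k(x) - c_k(x)|`. Summing the `p`-th powers over `k`
costs the factor `C` inside the `p`-th root, which is where the radius `ε / C^(1/p)` comes from.
-/

/-- Empirical `L_p` pseudo-distance with respect to the sample `t`. -/
noncomputable def empDist {T : Type*} (p n : ℕ) (t : Fin n → T) (f g : T → ℝ) : ℝ :=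
  ((1 / (n : ℝ)) * ∑ i, |f (t i) - g (t i)| ^ p) ^ ((1 : ℝ) / (p : ℝ))

/-- Empirical `L_∞` pseudo-distance with respect to the sample `t`. -/
noncomputable def empDistInf {T : Type*} (n : ℕ) (t : Fin n → T) (f g : T → ℝ) : ℝ :=
  ⨆ i : Fin n, |f (t i) - g (t i)|

/-- Minimal cardinality of a proper ε-net of `F` for the pseudo-distance `d`. -/
noncomputable def properCoveringNumber {α : Type*} (ε : ℝ) (F : Set α) (d : α → α → ℝ) : ℕ∞ :=
  sInf {n : ℕ∞ | ∃ N : Finset α, ↑N ⊆ F ∧ (∀ f ∈ F, ∃ c ∈ N, d f c < ε) ∧ (N.card : ℕ∞) = n}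

/-- The margin function `f_g (x, y) = (g_y(x) - max_{l ≠ y} g_l(x)) / 2`. -/
noncomputable def marginFun {X : Type*} {C : ℕ} (hC : 2 ≤ C) (g : Fin C → X → ℝ) :
    X × Fin C → ℝ := fun z =>
  (1 / 2) * (g z.2 z.1 -
    (Finset.univ.erase z.2).sup' (by
      rw [← Finset.card_pos, Finset.card_erase_of_mem (Finset.mem_univ _),
        Finset.card_univ, Fintype.card_fin]
      omega) (fun l => g l z.1))

open Finset

lemma Finset.abs_sup'_sub_sup'_le {ι α : Type*} [AddCommGroup α] [LinearOrder α]
    [IsOrderedAddMonoid α] {s : Finset ι} (hs : s.Nonempty) {f g : ι → α} {δ : α}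
    (h : ∀ i ∈ s, |f i - g i| ≤ δ) : |s.sup' hs f - s.sup' hs g| ≤ δ := by
  refine abs_sub_le_iff.2 ⟨sub_le_iff_le_add.2 (sup'_le _ _ fun i hi => ?_),
    sub_le_iff_le_add.2 (sup'_le _ _ fun i hi => ?_)⟩
  · exact (sub_le_iff_le_add.1 (abs_sub_le_iff.1 (h i hi)).1).trans
      (by gcongr; exact le_sup' g hi)
  · exact (sub_le_iff_le_add.1 (abs_sub_le_iff.1 (h i hi)).2).trans
      (by gcongr; exact le_sup' f hi)

lemma exists_abs_marginFun_sub_le {X : Type*} {C : ℕ} (hC : 2 ≤ C) (g c : Fin C → X → ℝ)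
    (z : X × Fin C) : ∃ k, |marginFun hC g z - marginFun hC c z| ≤ |g k z.1 - c k z.1| := by
  have hnt : (univ : Finset (Fin C)).Nontrivial :=
    univ_nontrivial_iff.2 (Fin.nontrivial_iff_two_le.2 hC)
  obtain ⟨k, -, hk⟩ := exists_mem_eq_sup' hnt.nonempty fun l => |g l z.1 - c l z.1|
  refine ⟨k, ?_⟩
  have hle : ∀ l, |g l z.1 - c l z.1| ≤ |g k z.1 - c k z.1| :=
    fun l => hk ▸ le_sup' (fun l => |g l z.1 - c l z.1|) (mem_univ l)
  have hmax := Finset.abs_sup'_sub_sup'_le (hnt.erase_nonempty (a := z.2))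
    (f := fun l => g l z.1) (g := fun l => c l z.1) fun l _ => hle l
  have hy := hle z.2
  simp only [marginFun]
  rw [abs_le] at hmax hy ⊢
  constructor <;> linarith

section CoveringNumber

variable {α : Type*} {ε : ℝ} {F : Set α} {d : α → α → ℝ}

lemma properCoveringNumber_le_card (N : Finset α) (hNF : ↑N ⊆ F)
    (hN : ∀ f ∈ F, ∃ c ∈ N, d f c < ε) : properCoveringNumber ε F d ≤ N.card :=
  sInf_le ⟨N, hNF, hN, rfl⟩

lemma properCoveringNumber_empty : properCoveringNumber ε ∅ d = 0 :=
  nonpos_iff_eq_zero.1 <| by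
    simpa using properCoveringNumber_le_card (ε := ε) (d := d) ∅ (by simp) (by simp)

lemma one_le_properCoveringNumber (hF : F.Nonempty) : 1 ≤ properCoveringNumber ε F d := by
  refine le_sInf ?_
  rintro _ ⟨N, -, hN, rfl⟩
  obtain ⟨f, hf⟩ := hF
  obtain ⟨c, hc, -⟩ := hN f hf
  exact_mod_cast card_pos.2 ⟨c, hc⟩

lemma exists_finset_card_eq_properCoveringNumber (h : properCoveringNumber ε F d ≠ ⊤) :
    ∃ N : Finset α, ↑N ⊆ F ∧ (∀ f ∈ F, ∃ c ∈ N, d f c < ε) ∧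
      (N.card : ℕ∞) = properCoveringNumber ε F d := by
  have hne : {n : ℕ∞ | ∃ N : Finset α, ↑N ⊆ F ∧ (∀ f ∈ F, ∃ c ∈ N, d f c < ε) ∧
      (N.card : ℕ∞) = n}.Nonempty := by
    refine Set.nonempty_iff_ne_empty.2 fun hempty => h ?_
    rw [properCoveringNumber, hempty, sInf_empty]
  exact csInf_mem hne

theorem properCoveringNumber_le_prod {ι β : Type*} [Fintype ι] (S : ι → Set α)
    (Φ : (ι → α) → β) {ε' : ℝ} {d' : β → β → ℝ}
    (hΦ : ∀ g c : ι → α, (∀ k, d (g k) (c k) < ε) → d' (Φ g) (Φ c) < ε') :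
    properCoveringNumber ε' {b | ∃ g : ι → α, (∀ k, g k ∈ S k) ∧ b = Φ g} d' ≤
      ∏ k, properCoveringNumber ε (S k) d := by
  classical
  by_cases hS : ∃ k, S k = ∅
  · obtain ⟨k, hk⟩ := hS
    have : {b | ∃ g : ι → α, (∀ k, g k ∈ S k) ∧ b = Φ g} = ∅ :=
      Set.eq_empty_of_forall_notMem fun _ ⟨g, hg, _⟩ => by simpa [hk] using hg k
    rw [this, properCoveringNumber_empty]
    exact zero_le
  push Not at hS
  by_cases htop : ∏ k, properCoveringNumber ε (S k) d = ⊤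
  · exact htop ▸ le_top
  have hfin : ∀ k, properCoveringNumber ε (S k) d ≠ ⊤ := fun k =>
    ne_top_of_le_ne_top htop <| single_le_prod'
      (fun j _ => one_le_properCoveringNumber (hS j)) (mem_univ k)
  choose N hNS hN hcard using
    fun k => exists_finset_card_eq_properCoveringNumber (hfin k)
  calc properCoveringNumber ε' {b | ∃ g : ι → α, (∀ k, g k ∈ S k) ∧ b = Φ g} d'
      ≤ ((Fintype.piFinset N).image Φ).card := by
        refine properCoveringNumber_le_card _ ?_ ?_
        · intro b hb
          obtain ⟨g, hg, rfl⟩ := mem_image.1 hb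
          exact ⟨g, fun k => hNS k (Fintype.mem_piFinset.1 hg k), rfl⟩
        · rintro _ ⟨g, hg, rfl⟩
          choose c hcN hc using fun k => hN k (g k) (hg k)
          exact ⟨Φ c, mem_image_of_mem _ (Fintype.mem_piFinset.2 hcN), hΦ g c hc⟩
    _ ≤ (Fintype.piFinset N).card := by exact_mod_cast card_image_le
    _ = ∏ k, properCoveringNumber ε (S k) d := by
        rw [Fintype.card_piFinset, Nat.cast_prod]
        exact prod_congr rfl fun k _ => hcard k

end CoveringNumber

lemma empDist_lt_iff {T : Type*} {p n : ℕ} (hp : 0 < p) (t : Fin n → T) (f g : T → ℝ)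
    {ε : ℝ} (hε : 0 ≤ ε) :
    empDist p n t f g < ε ↔ 1 / (n : ℝ) * ∑ i, |f (t i) - g (t i)| ^ p < ε ^ p := by
  rw [empDist, show (1 : ℝ) / p = (p : ℝ)⁻¹ from one_div _,
    Real.rpow_inv_lt_iff_of_pos (by positivity) hε (by positivity), Real.rpow_natCast]

section Domination

variable {ι T S : Type*} [Fintype ι] {n : ℕ} (t : Fin n → T) (π : T → S)
  {f f' : T → ℝ} {g g' : ι → S → ℝ} {ε : ℝ}

lemma empDist_lt_of_forall_exists_abs_le [Nonempty ι] {p : ℕ} (hp : 0 < p)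
    (hdom : ∀ x, ∃ k, |f x - f' x| ≤ |g k (π x) - g' k (π x)|) (hε : 0 ≤ ε)
    (h : ∀ k, empDist p n (fun i => π (t i)) (g k) (g' k) <
      ε / (Fintype.card ι : ℝ) ^ ((1 : ℝ) / p)) :
    empDist p n t f f' < ε := by
  have hι : (0 : ℝ) < Fintype.card ι := by exact_mod_cast Fintype.card_pos
  have hpow : (ε / (Fintype.card ι : ℝ) ^ ((1 : ℝ) / p)) ^ p = ε ^ p / Fintype.card ι := by
    rw [div_pow, one_div, Real.rpow_inv_natCast_pow hι.le hp.ne']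
  have hε' : 0 ≤ ε / (Fintype.card ι : ℝ) ^ ((1 : ℝ) / p) := by positivity
  simp_rw [empDist_lt_iff hp _ _ _ hε', hpow] at h
  rw [empDist_lt_iff hp _ _ _ hε]
  have hpt : ∀ i, |f (t i) - f' (t i)| ^ p ≤ ∑ k, |g k (π (t i)) - g' k (π (t i))| ^ p := by
    intro i
    obtain ⟨k, hk⟩ := hdom (t i)
    exact (pow_le_pow_left₀ (abs_nonneg _) hk p).trans
      (single_le_sum (f := fun k => |g k (π (t i)) - g' k (π (t i))| ^ p)
        (fun k _ => by positivity) (mem_univ k))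
  calc 1 / (n : ℝ) * ∑ i, |f (t i) - f' (t i)| ^ p
      ≤ ∑ k, 1 / (n : ℝ) * ∑ i, |g k (π (t i)) - g' k (π (t i))| ^ p := by
        rw [← mul_sum, sum_comm]
        gcongr with i
        exact hpt i
    _ < ∑ _k : ι, ε ^ p / Fintype.card ι := sum_lt_sum_of_nonempty univ_nonempty fun k _ => h k
    _ = ε ^ p := by
        rw [sum_const, card_univ, nsmul_eq_mul]
        field_simp

lemma empDistInf_lt_of_forall_exists_abs_le [Nonempty ι]
    (hdom : ∀ x, ∃ k, |f x - f' x| ≤ |g k (π x) - g' k (π x)|)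
    (h : ∀ k, empDistInf n (fun i => π (t i)) (g k) (g' k) < ε) :
    empDistInf n t f f' < ε := by
  set δ := univ.sup' univ_nonempty fun k => empDistInf n (fun i => π (t i)) (g k) (g' k)
  have hδ : δ < ε := (sup'_lt_iff _).2 fun k _ => h k
  have hδ₀ : 0 ≤ δ := le_sup'_of_le _ (mem_univ (Classical.arbitrary ι))
    (Real.iSup_nonneg fun _ => abs_nonneg _)
  refine lt_of_le_of_lt (Real.iSup_le (fun i => ?_) hδ₀) hδ
  obtain ⟨k, hk⟩ := hdom (t i)
  calc |f (t i) - f' (t i)| ≤ |g k (π (t i)) - g' k (π (t i))| := hk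
    _ ≤ empDistInf n (fun i => π (t i)) (g k) (g' k) :=
        le_ciSup (f := fun j => |g k (π (t j)) - g' k (π (t j))|) (Finite.bddAbove_range _) i
    _ ≤ δ := le_sup' (fun k => empDistInf n (fun i => π (t i)) (g k) (g' k)) (mem_univ k)

end Domination

theorem stmt15 {X : Type*} (C : ℕ) (hC : 3 ≤ C)
    (Gc : Fin C → Set (X → ℝ))
    (m : ℕ) (z : Fin m → X × Fin C) (ε : ℝ) (hε : 0 < ε) :
    ∀ FG : Set (X × Fin C → ℝ),
      FG = {f | ∃ g : Fin C → X → ℝ, (∀ k, g k ∈ Gc k) ∧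
        f = marginFun (by omega) g} →
      (∀ p : ℕ, 0 < p →
        properCoveringNumber ε FG (empDist p m z) ≤
          ∏ k, properCoveringNumber (ε / (C : ℝ) ^ ((1 : ℝ) / (p : ℝ))) (Gc k)
            (empDist p m (fun i => (z i).1)))
      ∧ properCoveringNumber ε FG (empDistInf m z) ≤
          ∏ k, properCoveringNumber ε (Gc k) (empDistInf m (fun i => (z i).1)) := by
  rintro _ rfl
  have hC₂ : 2 ≤ C := by omega
  have : Nonempty (Fin C) := ⟨⟨0, by omega⟩⟩
  refine ⟨fun p hp => properCoveringNumber_le_prod Gc _ fun g c h => ?_,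
    properCoveringNumber_le_prod Gc _ fun g c h => ?_⟩
  · exact empDist_lt_of_forall_exists_abs_le z Prod.fst hp
      (exists_abs_marginFun_sub_le hC₂ g c) hε.le (by simpa only [Fintype.card_fin] using h)
  · exact empDistInf_lt_of_forall_exists_abs_le z Prod.fst
      (exists_abs_marginFun_sub_le hC₂ g c) h
end
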